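/- Let A: X → X* and B: X → X* be continuous, linear, and monotone. Then for every (x,x*) ∈ X×X*, inf_{y*∈X*} ( 𝒞_A(x, x*−y*) + 𝒞_B(x, y*) ) = 𝒞_{A+B}(x,x*), and the infimum is attained. Consequently this partial infimal convolution is the autoconjugate representer 𝒞_{A+B} for A+B. -/

import Mathlib

noncomputable section
open scoped Classical
open Filter Topology

/-- The Fenchel conjugate of `F : X × X* → (-∞,+∞]`, as a function on `X* × X`:
`F*(x*,x) = sup_{(y,y*)} (⟨y,x*⟩ + ⟨x,y*⟩ - F(y,y*))`. -/
def conj2 {X : Type*} [NormedAddCommGroup X] [NormedSpace ℝ X]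
    (F : X × (X →L[ℝ] ℝ) → EReal) : (X →L[ℝ] ℝ) × X → EReal :=
  fun p => ⨆ q : X × (X →L[ℝ] ℝ), ((p.1 q.1 + q.2 p.2 : ℝ) : EReal) - F q

/-- `F` is autoconjugate: `F*(x*,x) = F(x,x*)` for all `(x,x*)`. -/
def Autoconjugate {X : Type*} [NormedAddCommGroup X] [NormedSpace ℝ X]
    (F : X × (X →L[ℝ] ℝ) → EReal) : Prop :=
  ∀ (x : X) (x' : X →L[ℝ] ℝ), conj2 F (x', x) = F (x, x')

/-- `F` is a representer for the set-valued operator `A : X ⇉ X*`: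
`gra A = {(x,x*) : F(x,x*) = ⟨x,x*⟩}`. -/
def IsRepresenter {X : Type*} [NormedAddCommGroup X] [NormedSpace ℝ X]
    (F : X × (X →L[ℝ] ℝ) → EReal) (A : X → Set (X →L[ℝ] ℝ)) : Prop :=
  ∀ (x : X) (x' : X →L[ℝ] ℝ), x' ∈ A x ↔ F (x, x') = ((x' x : ℝ) : EReal)

/-- A set-valued operator `A : X ⇉ X*` is monotone. -/
def MonotoneOp {X : Type*} [NormedAddCommGroup X] [NormedSpace ℝ X]
    (A : X → Set (X →L[ℝ] ℝ)) : Prop :=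
  ∀ ⦃x y : X⦄ ⦃x' y' : X →L[ℝ] ℝ⦄, x' ∈ A x → y' ∈ A y → 0 ≤ (x' - y') (x - y)

/-- A set-valued operator is maximal monotone if it is monotone and admits no proper
monotone extension (in the sense of graph inclusion). -/
def MaximalMonotoneOp {X : Type*} [NormedAddCommGroup X] [NormedSpace ℝ X]
    (A : X → Set (X →L[ℝ] ℝ)) : Prop :=
  MonotoneOp A ∧ ∀ B : X → Set (X →L[ℝ] ℝ), MonotoneOp B → (∀ x, A x ⊆ B x) → B = A

/-- The quadratic function `q_A(x) = ½⟨x,Ax⟩` associated with a continuous linear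
`A : X → X*`. -/
def qF {X : Type*} [NormedAddCommGroup X] [NormedSpace ℝ X]
    (A : X →L[ℝ] X →L[ℝ] ℝ) : X → ℝ :=
  fun x => (1 / 2) * A x x

/-- The Fenchel conjugate of a real-valued function `φ : X → ℝ`, as an `EReal`-valued
function on `X*`: `φ*(x*) = sup_y (⟨y,x*⟩ - φ(y))`. -/
def legendre {X : Type*} [NormedAddCommGroup X] [NormedSpace ℝ X]
    (φ : X → ℝ) : (X →L[ℝ] ℝ) → EReal :=
  fun x' => ⨆ y : X, ((x' y - φ y : ℝ) : EReal)

/-- The symmetric part `A₊ = ½A + ½A*` of a continuous linear `A : X → X*`, where the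
adjoint (restricted to `X`) is `A.flip`. -/
def symPart {X : Type*} [NormedAddCommGroup X] [NormedSpace ℝ X]
    (A : X →L[ℝ] X →L[ℝ] ℝ) : X →L[ℝ] X →L[ℝ] ℝ :=
  (1 / 2 : ℝ) • (A + A.flip)

/-- The antisymmetric part `A∘ = ½A - ½A*` of a continuous linear `A : X → X*`. -/
def antiPart {X : Type*} [NormedAddCommGroup X] [NormedSpace ℝ X]
    (A : X →L[ℝ] X →L[ℝ] ℝ) : X →L[ℝ] X →L[ℝ] ℝ :=
  (1 / 2 : ℝ) • (A - A.flip)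

/-- The Fitzpatrick function of a continuous linear `A : X → X*`:
`F_A(x,x*) = sup_y (⟨x,Ay⟩ + ⟨y,x*⟩ - ⟨y,Ay⟩)`. -/
def fitz {X : Type*} [NormedAddCommGroup X] [NormedSpace ℝ X]
    (A : X →L[ℝ] X →L[ℝ] ℝ) : X × (X →L[ℝ] ℝ) → EReal :=
  fun p => ⨆ y : X, ((A y p.1 + p.2 y - A y y : ℝ) : EReal)

/-- The Ghoussoub autoconjugate function `𝒞_A(x,x*) = q_{A₊}(x) + q_{A₊}*(x* - A∘x)`
associated with a continuous linear monotone `A : X → X*`. -/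
def ghoussoub {X : Type*} [NormedAddCommGroup X] [NormedSpace ℝ X]
    (A : X →L[ℝ] X →L[ℝ] ℝ) : X × (X →L[ℝ] ℝ) → EReal :=
  fun p => ((qF (symPart A) p.1 : ℝ) : EReal) + legendre (qF (symPart A)) (p.2 - antiPart A p.1)

/-!
Write `q = q_{A₊}`. Since `q` is a positive semidefinite quadratic form, the Fenchel–Young
inequality `ξ y - q y ≤ q* ξ` is an equality exactly at `ξ = A₊ y`. This turns `𝒞_A` into a
supremum of affine functions, from which autoconjugacy and the representer property follow by
choosing the right test points. Because `q_{(A+B)₊} = q_{A₊} + q_{B₊}` and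
`(A+B)∘ = A∘ + B∘`, the infimal convolution formula reduces to the exactness of
`(q_{A₊} + q_{B₊})* = q_{A₊}* □ q_{B₊}*`, which holds because `q_{B₊}` is continuous: the
Hahn–Banach theorem puts a continuous affine function between the concave function
`ξ - q_{A₊} - (q_{A₊} + q_{B₊})* ξ` and the convex function `q_{B₊}`.
-/

open Set

theorem EReal.coe_add_iSup {ι : Sort*} (a : ℝ) (f : ι → EReal) :
    (a : EReal) + ⨆ i, f i = ⨆ i, ((a : EReal) + f i) := by
  have cancel : ∀ (b : ℝ) (x : EReal), (b : EReal) + ((-b : ℝ) + x) = x := fun b x => by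
    rw [← add_assoc, ← EReal.coe_add, add_neg_cancel, EReal.coe_zero, zero_add]
  refine le_antisymm ?_ (iSup_le fun i => add_le_add le_rfl (le_iSup f i))
  conv_rhs => rw [← cancel a (⨆ i, ((a : EReal) + f i))]
  refine add_le_add le_rfl (iSup_le fun i => ?_)
  calc f i = ((-a : ℝ) : EReal) + ((- -a : ℝ) + f i) := (cancel (-a) (f i)).symm
    _ ≤ ((-a : ℝ) : EReal) + ⨆ i, ((a : EReal) + f i) := by
      rw [neg_neg]
      exact add_le_add le_rfl (le_iSup_of_le i le_rfl)

section Sandwich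

variable {E : Type*} [TopologicalSpace E] [AddCommGroup E] [Module ℝ E]
  [IsTopologicalAddGroup E] [ContinuousSMul ℝ E]

/-- The separating hyperplane of the strict epigraph of `g` and the hypograph of `h` is not
vertical, since it separates `(0, h 0)` from `(0, g 0 + 1)`. -/
theorem exists_affine_between {g h : E → ℝ} (hg : ConvexOn ℝ univ g) (hgc : Continuous g)
    (hh : ConcaveOn ℝ univ h) (hhg : ∀ y, h y ≤ g y) :
    ∃ (v : StrongDual ℝ E) (c : ℝ), ∀ y, h y ≤ v y + c ∧ v y + c ≤ g y := by
  obtain ⟨φ, u, hφs, hφt⟩ := geometric_hahn_banach_open hg.convex_strict_epigraph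
    (by simpa using isOpen_lt (hgc.comp continuous_fst) continuous_snd) hh.convex_hypograph
    (disjoint_left.2 fun q hs ht => lt_irrefl _ (hs.2.trans_le (ht.2.trans (hhg q.1))))
  set ψ := φ.comp (ContinuousLinearMap.inl ℝ E ℝ)
  set β := φ (0, 1)
  have hφ : ∀ y r, φ (y, r) = ψ y + r * β := by
    intro y r
    have : ((y, r) : E × ℝ) = (y, 0) + r • (0, 1) := by simp
    rw [this, map_add, map_smul, smul_eq_mul]
    rfl
  have hlt : ∀ y r, g y < r → ψ y + r * β < u := fun y r hr => hφ y r ▸ hφs _ ⟨trivial, hr⟩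
  have hge : ∀ y, u ≤ ψ y + h y * β := fun y => hφ y (h y) ▸ hφt _ ⟨trivial, le_rfl⟩
  have hβ : β < 0 := by nlinarith [hlt 0 (g 0 + 1) (lt_add_one _), hge 0, hhg 0]
  have hgu : ∀ y, ψ y + g y * β ≤ u := by
    intro y
    refine le_of_forall_pos_lt_add fun δ hδ => ?_
    have hε : 0 < δ / -β := div_pos hδ (neg_pos.2 hβ)
    have := hlt y (g y + δ / -β) (by linarith)
    have e : (g y + δ / -β) * β = g y * β - δ := by field_simp [hβ.ne]; ring
    linarith
  refine ⟨-β⁻¹ • ψ, u / β, fun y => ?_⟩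
  have e : (-β⁻¹ • ψ) y + u / β = (u - ψ y) / β := by
    simp only [smul_apply, smul_eq_mul]
    ring
  rw [e, le_div_iff_of_neg hβ, div_le_iff_of_neg hβ]
  exact ⟨by linarith [hge y], by linarith [hgu y]⟩

end Sandwich

section Legendre

variable {X : Type*} [NormedAddCommGroup X] [NormedSpace ℝ X]

theorem coe_le_legendre (φ : X → ℝ) (ξ : X →L[ℝ] ℝ) (y : X) :
    ((ξ y - φ y : ℝ) : EReal) ≤ legendre φ ξ :=
  le_iSup (fun y => ((ξ y - φ y : ℝ) : EReal)) y

theorem legendre_le_coe_iff {φ : X → ℝ} {ξ : X →L[ℝ] ℝ} {p : ℝ} :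
    legendre φ ξ ≤ p ↔ ∀ y, ξ y - φ y ≤ p := by
  simp only [legendre, iSup_le_iff, EReal.coe_le_coe_iff]

theorem legendre_ne_bot (φ : X → ℝ) (ξ : X →L[ℝ] ℝ) : legendre φ ξ ≠ ⊥ :=
  ne_bot_of_le_ne_bot (EReal.coe_ne_bot _) (coe_le_legendre φ ξ 0)

theorem legendre_add_le (f g : X → ℝ) (ξ η : X →L[ℝ] ℝ) :
    legendre (f + g) (ξ + η) ≤ legendre f ξ + legendre g η :=
  iSup_le fun y => by
    have e : ((ξ + η) y - (f + g) y : ℝ) = (ξ y - f y) + (η y - g y) := by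
      simp only [add_apply, Pi.add_apply]
      ring
    rw [e, EReal.coe_add]
    exact add_le_add (coe_le_legendre f ξ y) (coe_le_legendre g η y)

theorem exists_legendre_sub_add_legendre_le {f g : X → ℝ} (hf : ConvexOn ℝ univ f)
    (hg : ConvexOn ℝ univ g) (hgc : Continuous g) (ξ : X →L[ℝ] ℝ) :
    ∃ η, legendre f (ξ - η) + legendre g η ≤ legendre (f + g) ξ := by
  by_cases htop : legendre (f + g) ξ = ⊤
  · exact ⟨0, htop ▸ le_top⟩
  obtain ⟨p, hp⟩ : ∃ p : ℝ, legendre (f + g) ξ = p :=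
    ⟨_, (EReal.coe_toReal htop (legendre_ne_bot _ _)).symm⟩
  have hbound := legendre_le_coe_iff.1 hp.le
  have hconc : ConcaveOn ℝ univ (fun y => ξ y - f y - p) :=
    ((ξ.toLinearMap.concaveOn convex_univ).sub hf).sub (convexOn_const p convex_univ)
  obtain ⟨η, c, hη⟩ := exists_affine_between hg hgc hconc fun y => by
    linarith [hbound y, show (f + g) y = f y + g y from rfl]
  refine ⟨η, ?_⟩
  calc legendre f (ξ - η) + legendre g η ≤ ((p + c : ℝ) : EReal) + ((-c : ℝ) : EReal) := by
        refine add_le_add (legendre_le_coe_iff.2 fun y => ?_) (legendre_le_coe_iff.2 fun y => ?_)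
        · rw [sub_apply]
          linarith [(hη y).1]
        · linarith [(hη y).2]
    _ = legendre (f + g) ξ := by rw [hp, ← EReal.coe_add, add_neg_cancel_right]

end Legendre

section Quadratic

variable {X : Type*} [NormedAddCommGroup X] [NormedSpace ℝ X] (S : X →L[ℝ] X →L[ℝ] ℝ)

theorem qF_convexOn (hS : ∀ x, 0 ≤ S x x) : ConvexOn ℝ univ (qF S) := by
  refine ⟨convex_univ, fun a _ b _ s t hs ht hst => ?_⟩
  have hab := hS (a - b)
  simp only [qF, smul_eq_mul, map_add, map_smul, map_sub, add_apply, smul_apply,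
    sub_apply] at hab ⊢
  obtain rfl : t = 1 - s := by linarith
  nlinarith [mul_nonneg (mul_nonneg hs ht) hab]

theorem qF_continuous : Continuous (qF S) := by
  unfold qF
  fun_prop

variable {S}

theorem qF_add_smul (hS : ∀ x y, S x y = S y x) (x z : X) (t : ℝ) :
    qF S (x + t • z) = qF S x + t * S x z + t ^ 2 * qF S z := by
  simp only [qF, map_add, map_smul, add_apply, smul_apply, smul_eq_mul, hS z x]
  ring

theorem apply_sub_qF_le (hS : ∀ x y, S x y = S y x) (hpos : ∀ x, 0 ≤ S x x) (x y : X) :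
    S x y - qF S y ≤ qF S x := by
  have := hpos (y - x)
  simp only [qF, map_sub, sub_apply, hS y x] at this ⊢
  linarith

theorem legendre_qF_apply_self (hS : ∀ x y, S x y = S y x) (hpos : ∀ x, 0 ≤ S x x) (x : X) :
    legendre (qF S) (S x) = qF S x := by
  refine le_antisymm (legendre_le_coe_iff.2 (apply_sub_qF_le hS hpos x)) ?_
  convert coe_le_legendre (qF S) (S x) x using 2
  simp only [qF]
  ring

theorem eq_of_forall_sub_qF_le (hS : ∀ x y, S x y = S y x) {ξ : X →L[ℝ] ℝ} {x : X}
    (h : ∀ y, ξ y - qF S y ≤ ξ x - qF S x) : ξ = S x := by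
  ext z
  have hdisc := discrim_le_zero (a := qF S z) (b := S x z - ξ z) (c := 0) fun t => by
    have := h (x + t • z)
    rw [qF_add_smul hS, map_add, map_smul, smul_eq_mul] at this
    nlinarith
  rw [discrim, mul_zero, sub_zero] at hdisc
  linarith [pow_eq_zero_iff two_ne_zero |>.1 (hdisc.antisymm (sq_nonneg _))]

end Quadratic

section Parts

variable {X : Type*} [NormedAddCommGroup X] [NormedSpace ℝ X] (C : X →L[ℝ] X →L[ℝ] ℝ)

theorem symPart_apply (y z : X) : symPart C y z = (C y z + C z y) / 2 := by
  simp only [symPart, smul_apply, add_apply, ContinuousLinearMap.flip_apply, smul_eq_mul]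
  ring

theorem antiPart_apply (y z : X) : antiPart C y z = (C y z - C z y) / 2 := by
  simp only [antiPart, smul_apply, sub_apply, ContinuousLinearMap.flip_apply, smul_eq_mul]
  ring

theorem symPart_comm (y z : X) : symPart C y z = symPart C z y := by
  rw [symPart_apply, symPart_apply, add_comm]

theorem symPart_apply_self (y : X) : symPart C y y = C y y := by
  rw [symPart_apply]
  ring

theorem antiPart_apply_self (y : X) : antiPart C y y = 0 := by
  rw [antiPart_apply, sub_self, zero_div]

theorem symPart_apply_self_nonneg (hC : ∀ x, 0 ≤ C x x) (y : X) : 0 ≤ symPart C y y :=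
  (hC y).trans_eq (symPart_apply_self C y).symm

theorem symPart_add_antiPart : symPart C + antiPart C = C := by
  ext y z
  simp only [add_apply, symPart_apply, antiPart_apply]
  ring

theorem qF_symPart_add (B : X →L[ℝ] X →L[ℝ] ℝ) :
    qF (symPart (C + B)) = qF (symPart C) + qF (symPart B) := by
  ext y
  simp only [qF, Pi.add_apply, symPart_apply_self, add_apply]
  ring

theorem antiPart_add (B : X →L[ℝ] X →L[ℝ] ℝ) :
    antiPart (C + B) = antiPart C + antiPart B := by
  ext y z
  simp only [add_apply, antiPart_apply]
  ring

end Parts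

section Ghoussoub

variable {X : Type*} [NormedAddCommGroup X] [NormedSpace ℝ X] (C : X →L[ℝ] X →L[ℝ] ℝ)

theorem ghoussoub_eq_iSup (x : X) (x' : X →L[ℝ] ℝ) :
    ghoussoub C (x, x') =
      ⨆ y, ((qF (symPart C) x + ((x' - antiPart C x) y - qF (symPart C) y) : ℝ) : EReal) := by
  simp only [ghoussoub, legendre, EReal.coe_add_iSup, EReal.coe_add]

theorem coe_le_ghoussoub (x : X) (x' : X →L[ℝ] ℝ) (y : X) :
    ((qF (symPart C) x + ((x' - antiPart C x) y - qF (symPart C) y) : ℝ) : EReal)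
      ≤ ghoussoub C (x, x') :=
  ghoussoub_eq_iSup C x x' ▸ le_iSup_of_le y le_rfl

theorem ghoussoub_le_coe_iff {x : X} {x' : X →L[ℝ] ℝ} {p : ℝ} :
    ghoussoub C (x, x') ≤ p ↔
      ∀ y, qF (symPart C) x + ((x' - antiPart C x) y - qF (symPart C) y) ≤ p := by
  simp only [ghoussoub_eq_iSup, iSup_le_iff, EReal.coe_le_coe_iff]

variable {C}

theorem legendre_qF_symPart_apply_self (hC : ∀ x, 0 ≤ C x x) (x : X) :
    legendre (qF (symPart C)) (symPart C x) = qF (symPart C) x :=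
  legendre_qF_apply_self (symPart_comm C) (symPart_apply_self_nonneg C hC) x

theorem ghoussoub_symPart_add_antiPart (hC : ∀ x, 0 ≤ C x x) (x z : X) :
    ghoussoub C (z, symPart C x + antiPart C z) = (qF (symPart C) z + qF (symPart C) x : ℝ) := by
  simp only [ghoussoub, add_sub_cancel_right, legendre_qF_symPart_apply_self hC, EReal.coe_add]

theorem ghoussoub_autoconjugate (hC : ∀ x, 0 ≤ C x x) : Autoconjugate (ghoussoub C) := by
  intro x x'
  refine le_antisymm (iSup_le fun ⟨y, y'⟩ => ?_) ?_
  · calc ((x' y + y' x : ℝ) : EReal) - ghoussoub C (y, y')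
        ≤ ((x' y + y' x : ℝ) : EReal)
            - ((qF (symPart C) y + ((y' - antiPart C y) x - qF (symPart C) x) : ℝ) : EReal) :=
          EReal.sub_le_sub le_rfl (coe_le_ghoussoub C y y' x)
      _ = ((qF (symPart C) x + ((x' - antiPart C x) y - qF (symPart C) y) : ℝ) : EReal) := by
          rw [← EReal.coe_sub]
          simp only [qF, sub_apply, symPart_apply, antiPart_apply]
          congr 1
          ring
      _ ≤ ghoussoub C (x, x') := coe_le_ghoussoub C x x' y
  · rw [ghoussoub_eq_iSup]
    refine iSup_le fun z => le_iSup_of_le (z, symPart C x + antiPart C z) (le_of_eq ?_)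
    rw [ghoussoub_symPart_add_antiPart hC, ← EReal.coe_sub]
    simp only [qF, add_apply, sub_apply, symPart_apply, antiPart_apply]
    congr 1
    ring

theorem ghoussoub_isRepresenter (hC : ∀ x, 0 ≤ C x x) :
    IsRepresenter (ghoussoub C) (fun x => {x' | x' = C x}) := by
  intro x x'
  have hC_eq : ∀ y, C y = symPart C y + antiPart C y := fun y =>
    (congrArg (· y) (symPart_add_antiPart C)).symm
  constructor
  · rintro (rfl : x' = C x)
    rw [hC_eq x, ghoussoub_symPart_add_antiPart hC]
    simp only [qF, add_apply, symPart_apply, antiPart_apply]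
    congr 1
    ring
  · intro h
    have hmax : ∀ y, (x' - antiPart C x) y - qF (symPart C) y
        ≤ (x' - antiPart C x) x - qF (symPart C) x := fun y => by
      have := (ghoussoub_le_coe_iff C).1 h.le y
      rw [sub_apply x' (antiPart C x) x, antiPart_apply_self]
      linarith
    show x' = C x
    rw [hC_eq x, ← eq_of_forall_sub_qF_le (symPart_comm C) hmax, sub_add_cancel]

theorem ghoussoub_add_apply (A B : X →L[ℝ] X →L[ℝ] ℝ) (x : X) (x' : X →L[ℝ] ℝ) :
    ghoussoub (A + B) (x, x') = ((qF (symPart A) x + qF (symPart B) x : ℝ) : EReal)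
      + legendre (qF (symPart A) + qF (symPart B)) (x' - antiPart A x - antiPart B x) := by
  simp only [ghoussoub, qF_symPart_add, antiPart_add, Pi.add_apply, add_apply, sub_add_eq_sub_sub]

theorem iInf_ghoussoub_sub_add_ghoussoub {A B : X →L[ℝ] X →L[ℝ] ℝ} (hA : ∀ x, 0 ≤ A x x)
    (hB : ∀ x, 0 ≤ B x x) (x : X) (x' : X →L[ℝ] ℝ) :
    (⨅ y', ghoussoub A (x, x' - y') + ghoussoub B (x, y')) = ghoussoub (A + B) (x, x') ∧
      ∃ y', ghoussoub (A + B) (x, x') = ghoussoub A (x, x' - y') + ghoussoub B (x, y') := by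
  set w := x' - antiPart A x - antiPart B x with hw
  have hsplit : ∀ y', ghoussoub A (x, x' - y') + ghoussoub B (x, y')
      = ((qF (symPart A) x + qF (symPart B) x : ℝ) : EReal)
        + (legendre (qF (symPart A)) (w - (y' - antiPart B x))
          + legendre (qF (symPart B)) (y' - antiPart B x)) := fun y' => by
    have : x' - y' - antiPart A x = w - (y' - antiPart B x) := by rw [hw]; abel
    simp only [ghoussoub, this, EReal.coe_add]
    exact add_add_add_comm _ _ _ _
  have hle : ∀ y', ghoussoub (A + B) (x, x') ≤ ghoussoub A (x, x' - y') + ghoussoub B (x, y') :=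
    fun y' => by
      rw [hsplit, ghoussoub_add_apply]
      gcongr
      simpa using legendre_add_le (qF (symPart A)) (qF (symPart B))
        (w - (y' - antiPart B x)) (y' - antiPart B x)
  obtain ⟨η, hη⟩ := exists_legendre_sub_add_legendre_le
    (qF_convexOn _ (symPart_apply_self_nonneg A hA))
    (qF_convexOn _ (symPart_apply_self_nonneg B hB)) (qF_continuous _) w
  have hge : ghoussoub A (x, x' - (η + antiPart B x)) + ghoussoub B (x, η + antiPart B x)
      ≤ ghoussoub (A + B) (x, x') := by
    rw [hsplit, ghoussoub_add_apply, add_sub_cancel_right]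
    exact add_le_add le_rfl hη
  exact ⟨le_antisymm (iInf_le_of_le _ hge) (le_iInf hle), _, le_antisymm (hle _) hge⟩

end Ghoussoub

theorem stmt7_general {X : Type*} [NormedAddCommGroup X] [NormedSpace ℝ X]
    (A B : X →L[ℝ] X →L[ℝ] ℝ)
    (hmonoA : ∀ x : X, 0 ≤ A x x) (hmonoB : ∀ x : X, 0 ≤ B x x) :
    (∀ (x : X) (x' : X →L[ℝ] ℝ),
      (⨅ y' : X →L[ℝ] ℝ, ghoussoub A (x, x' - y') + ghoussoub B (x, y'))
        = ghoussoub (A + B) (x, x') ∧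
      ∃ y' : X →L[ℝ] ℝ,
        ghoussoub (A + B) (x, x') = ghoussoub A (x, x' - y') + ghoussoub B (x, y')) ∧
    Autoconjugate (ghoussoub (A + B)) ∧
    IsRepresenter (ghoussoub (A + B)) (fun x => {x' | x' = (A + B) x}) := by
  have hmonoAB : ∀ x : X, 0 ≤ (A + B) x x := fun x => add_nonneg (hmonoA x) (hmonoB x)
  exact ⟨iInf_ghoussoub_sub_add_ghoussoub hmonoA hmonoB, ghoussoub_autoconjugate hmonoAB,
    ghoussoub_isRepresenter hmonoAB⟩

/-- Proposition 2.8. For `A, B : X → X*` continuous, linear and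
monotone, the partial infimal convolution of `𝒞_A` and `𝒞_B` equals `𝒞_{A+B}` with
attained infimum, so it is the autoconjugate representer `𝒞_{A+B}` for `A + B`. -/
theorem stmt7 {X : Type*} [NormedAddCommGroup X] [NormedSpace ℝ X] [CompleteSpace X]
    (hrefl : Function.Surjective (NormedSpace.inclusionInDoubleDual ℝ X))
    (A B : X →L[ℝ] X →L[ℝ] ℝ)
    (hmonoA : ∀ x : X, 0 ≤ A x x) (hmonoB : ∀ x : X, 0 ≤ B x x) :
    (∀ (x : X) (x' : X →L[ℝ] ℝ),
      (⨅ y' : X →L[ℝ] ℝ, ghoussoub A (x, x' - y') + ghoussoub B (x, y'))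
        = ghoussoub (A + B) (x, x') ∧
      ∃ y' : X →L[ℝ] ℝ,
        ghoussoub (A + B) (x, x') = ghoussoub A (x, x' - y') + ghoussoub B (x, y')) ∧
    Autoconjugate (ghoussoub (A + B)) ∧
    IsRepresenter (ghoussoub (A + B)) (fun x => {x' | x' = (A + B) x}) :=
  stmt7_general A B hmonoA hmonoB
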